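/- For a partition π of a finite set U with the density matrix ρ(π) defined by ρ(π)_{jk} = 1/|U| if uⱼ and uₖ are in the same block of π and 0 otherwise, the logical entropy satisfies h(π) = 1 − tr[ρ(π)²], where h(π) = 1 − Σ_{B∈π} (|B|/|U|)². -/
import Mathlib


open scoped Classical

/-- For the density matrix ρ(π) of a partition π (entries 1/|U| on indit pairs and 0
on dit pairs), the logical entropy satisfies h(π) = 1 − tr[ρ(π)²]. -/
theorem logical_entropy_density_matrix {U : Type*} [Fintype U] [Nonempty U]
    (π : Finpartition (Finset.univ : Finset U)) :
    1 - ∑ B ∈ π.parts, ((B.card : ℚ) / (Fintype.card U : ℚ)) ^ 2 =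
      1 - Matrix.trace
        ((Matrix.of (fun j k : U =>
            if ∃ B ∈ π.parts, j ∈ B ∧ k ∈ B then (1 : ℚ) / (Fintype.card U : ℚ) else 0)) *
         (Matrix.of (fun j k : U =>
            if ∃ B ∈ π.parts, j ∈ B ∧ k ∈ B then (1 : ℚ) / (Fintype.card U : ℚ) else 0))) := by
  congr 1
  set c : ℚ := (1 : ℚ) / (Fintype.card U : ℚ) with hc
  have hdiag : ∀ B ∈ π.parts, ∀ j ∈ B,
      (∑ k : U, (if ∃ B' ∈ π.parts, j ∈ B' ∧ k ∈ B' then c else 0) *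
        (if ∃ B' ∈ π.parts, k ∈ B' ∧ j ∈ B' then c else 0)) = B.card * c ^ 2 := by
    intro B hB j hj
    have hiff : ∀ k : U, ((∃ B' ∈ π.parts, j ∈ B' ∧ k ∈ B') ↔ k ∈ B) := by
      intro k
      constructor
      · rintro ⟨B', hB', hjB', hkB'⟩
        rwa [π.eq_of_mem_parts hB' hB hjB' hj] at hkB'
      · intro hk; exact ⟨B, hB, hj, hk⟩
    have hiff' : ∀ k : U, ((∃ B' ∈ π.parts, k ∈ B' ∧ j ∈ B') ↔ k ∈ B) := by
      intro k
      constructor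
      · rintro ⟨B', hB', hkB', hjB'⟩
        rwa [π.eq_of_mem_parts hB' hB hjB' hj] at hkB'
      · intro hk; exact ⟨B, hB, hk, hj⟩
    calc (∑ k : U, (if ∃ B' ∈ π.parts, j ∈ B' ∧ k ∈ B' then c else 0) *
          (if ∃ B' ∈ π.parts, k ∈ B' ∧ j ∈ B' then c else 0))
        = ∑ k : U, (if k ∈ B then c ^ 2 else 0) := by
          refine Finset.sum_congr rfl fun k _ => ?_
          rw [if_congr (hiff k) rfl rfl, if_congr (hiff' k) rfl rfl]
          by_cases hk : k ∈ B <;> simp [hk, sq]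
      _ = B.card * c ^ 2 := by
          rw [Finset.sum_ite_mem, Finset.univ_inter, Finset.sum_const, nsmul_eq_mul]
  have huniv : (Finset.univ : Finset U) = π.parts.biUnion id := by
    rw [Finpartition.biUnion_parts]
  calc ∑ B ∈ π.parts, ((B.card : ℚ) / (Fintype.card U : ℚ)) ^ 2
      = ∑ B ∈ π.parts, ∑ j ∈ B, (B.card : ℚ) * c ^ 2 := by
        refine Finset.sum_congr rfl fun B hB => ?_
        rw [Finset.sum_const, nsmul_eq_mul, div_pow, hc, div_pow, one_pow]
        field_simp
    _ = ∑ j : U, ∑ k : U,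
          (if ∃ B' ∈ π.parts, j ∈ B' ∧ k ∈ B' then c else 0) *
          (if ∃ B' ∈ π.parts, k ∈ B' ∧ j ∈ B' then c else 0) := by
        refine Eq.symm ?_
        rw [Finset.sum_congr huniv fun _ _ => rfl,
          Finset.sum_biUnion π.supIndep.pairwiseDisjoint]
        exact Finset.sum_congr rfl fun B hB =>
          Finset.sum_congr rfl fun j hj => hdiag B hB j hj
    _ = Matrix.trace _ := by
        rw [Matrix.trace]
        refine Finset.sum_congr rfl fun j _ => ?_
        simp [Matrix.mul_apply]
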